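/- arXiv:2110.10830 — 6 statements merged into one kernel-verified Lean document; each statement's English description precedes it below -/
import Mathlib

section
/- Let χ be a complex-valued function (a Dirichlet character analogue), let P(χ) be a complex number, ℓ a positive even integer, and α a real number. If |P(χ)| ≤ ℓ/(20(1+|α|)), then the truncated exponential E_ℓ(α P(χ)) = ∑_{j=0}^{ℓ} (αP(χ))^j/j! satisfies |e^{αP(χ)}|(1−e^{−ℓ}) ≤ |E_ℓ(αP(χ))| ≤ |e^{αP(χ)}|(1+e^{−ℓ}), i.e. exp(α Re P(χ))·(1 − e^{−ℓ}) ≤ |E_ℓ(α P(χ))| ≤ exp(α Re P(χ))·(1 + e^{−ℓ}). -/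
open Finset

set_option maxHeartbeats 1000000 in
theorem stmt_3 (ℓ : ℕ) (hℓ : 0 < ℓ) (hev : Even ℓ) (α : ℝ) (P : ℂ)
    (hP : ‖P‖ ≤ (ℓ : ℝ) / (20 * (1 + |α|))) :
    ‖∑ j ∈ Finset.range (ℓ + 1), ((α : ℂ) * P) ^ j / j.factorial‖
      ≤ ‖Complex.exp ((α : ℂ) * P)‖ * (1 + Real.exp (-(ℓ : ℝ))) ∧
    ‖Complex.exp ((α : ℂ) * P)‖ * (1 - Real.exp (-(ℓ : ℝ)))
      ≤ ‖∑ j ∈ Finset.range (ℓ + 1), ((α : ℂ) * P) ^ j / j.factorial‖ := by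
  set z : ℂ := (α : ℂ) * P with hz
  set r : ℝ := ‖z‖ with hrdef
  set L : ℝ := (ℓ : ℝ) with hL
  have hL1 : (1 : ℝ) ≤ L := by rw [hL]; exact_mod_cast hℓ
  have hL0 : (0 : ℝ) < L := lt_of_lt_of_le one_pos hL1
  have hα : (0 : ℝ) < 1 + |α| := by positivity
  have hr0 : 0 ≤ r := norm_nonneg z
  -- r ≤ L/20
  have hr : r ≤ L / 20 := by
    have h1 : r = |α| * ‖P‖ := by
      rw [hrdef, hz, norm_mul, Complex.norm_real, Real.norm_eq_abs]
    have h2 : |α| * ‖P‖ ≤ |α| * (L / (20 * (1 + |α|))) :=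
      mul_le_mul_of_nonneg_left hP (abs_nonneg α)
    have h3 : |α| * (L / (20 * (1 + |α|))) ≤ L / 20 := by
      rw [div_mul_eq_div_div, mul_div_assoc']
      rw [div_le_div_iff₀ (by positivity) (by norm_num)]
      nlinarith [abs_nonneg α, hL1]
    linarith [h1 ▸ h2.trans h3]
  -- summabilities
  have hsumC : Summable (fun n : ℕ => z ^ n / (n.factorial : ℂ)) :=
    NormedSpace.expSeries_div_summable z
  have hsumR : Summable (fun n : ℕ => r ^ n / (n.factorial : ℝ)) :=
    Real.summable_pow_div_factorial r
  have hsumRt : Summable (fun k : ℕ => r ^ (k + (ℓ + 1)) / ((k + (ℓ + 1)).factorial : ℝ)) :=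
    (summable_nat_add_iff (ℓ + 1)).2 hsumR
  -- exp as tsum
  have hexp : Complex.exp z = ∑' n : ℕ, z ^ n / (n.factorial : ℂ) := by
    rw [Complex.exp_eq_exp_ℂ, NormedSpace.exp_eq_tsum_div]
  set S : ℂ := ∑ j ∈ Finset.range (ℓ + 1), z ^ j / (j.factorial : ℂ) with hS
  set T : ℝ := ∑' k : ℕ, r ^ (k + (ℓ + 1)) / ((k + (ℓ + 1)).factorial : ℝ) with hT
  have hdiff : Complex.exp z - S = ∑' k : ℕ, z ^ (k + (ℓ + 1)) / ((k + (ℓ + 1)).factorial : ℂ) := by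
    rw [hexp, hS, ← hsumC.sum_add_tsum_nat_add (ℓ + 1)]
    ring
  have hnormeq : ∀ k : ℕ, r ^ (k + (ℓ + 1)) / ((k + (ℓ + 1)).factorial : ℝ)
      = ‖z ^ (k + (ℓ + 1)) / ((k + (ℓ + 1)).factorial : ℂ)‖ := by
    intro k
    rw [norm_div, norm_pow, Complex.norm_natCast]
  have hsumCnorm : Summable (fun k : ℕ => ‖z ^ (k + (ℓ + 1)) / ((k + (ℓ + 1)).factorial : ℂ)‖) :=
    hsumRt.congr hnormeq
  have hDT : ‖Complex.exp z - S‖ ≤ T := by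
    rw [hdiff, hT]
    exact le_trans (norm_tsum_le_tsum_norm hsumCnorm) (le_of_eq (tsum_congr hnormeq).symm)
  -- bound T ≤ A * exp r
  set A : ℝ := r ^ (ℓ + 1) / ((ℓ + 1).factorial : ℝ) with hA
  have hfacpos : (0 : ℝ) < ((ℓ + 1).factorial : ℝ) := by exact_mod_cast Nat.factorial_pos _
  have hA0 : 0 ≤ A := by positivity
  have hTA : T ≤ A * Real.exp r := by
    have hsum2 : Summable (fun k : ℕ => A * (r ^ k / (k.factorial : ℝ))) := hsumR.mul_left A
    have hle : ∀ k : ℕ, r ^ (k + (ℓ + 1)) / ((k + (ℓ + 1)).factorial : ℝ)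
        ≤ A * (r ^ k / (k.factorial : ℝ)) := by
      intro k
      have hfac : ((ℓ + 1).factorial * k.factorial : ℝ) ≤ ((k + (ℓ + 1)).factorial : ℝ) := by
        exact_mod_cast Nat.le_of_dvd (Nat.factorial_pos _)
          ((Nat.add_comm (ℓ + 1) k) ▸ Nat.factorial_mul_factorial_dvd_factorial_add (ℓ + 1) k)
      have hkpos : (0 : ℝ) < ((ℓ + 1).factorial : ℝ) * (k.factorial : ℝ) := by positivity
      rw [hA, div_mul_div_comm]
      rw [div_le_div_iff₀ (by exact_mod_cast Nat.factorial_pos _) hkpos]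
      calc r ^ (k + (ℓ + 1)) * ((ℓ + 1).factorial * (k.factorial : ℝ))
          ≤ r ^ (k + (ℓ + 1)) * ((k + (ℓ + 1)).factorial : ℝ) := by
            apply mul_le_mul_of_nonneg_left _ (by positivity)
            exact_mod_cast hfac
        _ = r ^ (ℓ + 1) * r ^ k * ((k + (ℓ + 1)).factorial : ℝ) := by
            rw [← pow_add]; ring_nf
    calc T ≤ ∑' k : ℕ, A * (r ^ k / (k.factorial : ℝ)) := Summable.tsum_le_tsum hle hsumRt hsum2
      _ = A * Real.exp r := by
          rw [tsum_mul_left, Real.exp_eq_exp_ℝ, NormedSpace.exp_eq_tsum_div]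
  -- numeric ingredients
  have e1 : Real.exp 1 ≤ 68 / 25 := by
    have := Real.exp_one_lt_d9; linarith
  have hexpL : Real.exp L ≤ (68 / 25 : ℝ) ^ ℓ := by
    have h : Real.exp L = Real.exp 1 ^ ℓ := by
      rw [← Real.exp_nat_mul, mul_one, hL]
    rw [h]
    exact pow_le_pow_left₀ (Real.exp_pos 1).le e1 ℓ
  have e10 : Real.exp (1 / 10) ≤ 9 / 8 := by
    apply le_of_pow_le_pow_left₀ (n := 10) (by norm_num) (by norm_num)
    have h : Real.exp (1 / 10) ^ (10 : ℕ) = Real.exp 1 := by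
      rw [← Real.exp_nat_mul]; norm_num
    rw [h]
    have := Real.exp_one_lt_d9
    norm_num
    linarith
  have hexp2r : Real.exp (2 * r) ≤ (9 / 8 : ℝ) ^ ℓ := by
    calc Real.exp (2 * r) ≤ Real.exp ((ℓ : ℝ) * (1 / 10)) := by
          apply Real.exp_le_exp.2
          have : (ℓ : ℝ) * (1 / 10) = L / 10 := by rw [hL]; ring
          linarith
      _ = Real.exp (1 / 10) ^ ℓ := Real.exp_nat_mul _ ℓ
      _ ≤ (9 / 8 : ℝ) ^ ℓ := pow_le_pow_left₀ (Real.exp_pos _).le e10 ℓ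
  have hLfac : L ^ ℓ ≤ (ℓ.factorial : ℝ) * Real.exp L := by
    have := Real.pow_div_factorial_le_exp L (le_of_lt hL0) ℓ
    rw [div_le_iff₀ (by exact_mod_cast Nat.factorial_pos ℓ)] at this
    linarith
  have hfacmono : (ℓ.factorial : ℝ) ≤ ((ℓ + 1).factorial : ℝ) := by
    exact_mod_cast Nat.factorial_le (Nat.le_succ ℓ)
  -- core arithmetic : (L/20)^(ℓ+1) * (9/8)^ℓ * (68/25)^ℓ * (68/25)^ℓ ≤ L^ℓ
  have hcore : (L / 20) ^ (ℓ + 1) * (9 / 8 : ℝ) ^ ℓ * (68 / 25 : ℝ) ^ ℓ * (68 / 25 : ℝ) ^ ℓ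
      ≤ L ^ ℓ := by
    have step : (L / 20) ^ ℓ * (9 / 8 : ℝ) ^ ℓ * (68 / 25 : ℝ) ^ ℓ * (68 / 25 : ℝ) ^ ℓ
        = (L * (41616 / 100000)) ^ ℓ := by
      rw [← mul_pow, ← mul_pow, ← mul_pow]
      congr 1; ring
    have expand : (L / 20) ^ (ℓ + 1) * (9 / 8 : ℝ) ^ ℓ * (68 / 25 : ℝ) ^ ℓ * (68 / 25 : ℝ) ^ ℓ
        = (L / 20) * ((L / 20) ^ ℓ * (9 / 8 : ℝ) ^ ℓ * (68 / 25 : ℝ) ^ ℓ * (68 / 25 : ℝ) ^ ℓ) := by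
      rw [pow_succ]; ring
    rw [expand, step, mul_pow]
    have hc : ((41616 : ℝ) / 100000) ^ ℓ ≤ (1 / 2 : ℝ) ^ ℓ :=
      pow_le_pow_left₀ (by norm_num) (by norm_num) ℓ
    have h2pow : L ≤ (2 : ℝ) ^ ℓ := by
      rw [hL]; exact_mod_cast (Nat.lt_two_pow_self (n := ℓ)).le
    have hLpow : (0 : ℝ) ≤ L ^ ℓ := by positivity
    calc (L / 20) * (L ^ ℓ * ((41616 : ℝ) / 100000) ^ ℓ)
        = (L * ((41616 : ℝ) / 100000) ^ ℓ / 20) * L ^ ℓ := by ring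
      _ ≤ ((2 : ℝ) ^ ℓ * (1 / 2 : ℝ) ^ ℓ / 20) * L ^ ℓ := by
          apply mul_le_mul_of_nonneg_right _ hLpow
          apply div_le_div_of_nonneg_right _ (by norm_num)
          exact mul_le_mul h2pow hc (by positivity) (by positivity)
      _ = (1 / 20 : ℝ) * L ^ ℓ := by rw [← mul_pow]; norm_num
      _ ≤ L ^ ℓ := by nlinarith
  -- h2 : r^(ℓ+1) * exp(2r + L) ≤ (ℓ+1)!
  have h2 : r ^ (ℓ + 1) * Real.exp (2 * r + L) ≤ ((ℓ + 1).factorial : ℝ) := by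
    have hrpow : r ^ (ℓ + 1) ≤ (L / 20) ^ (ℓ + 1) := pow_le_pow_left₀ hr0 hr _
    have hmain : (L / 20) ^ (ℓ + 1) * ((9 / 8 : ℝ) ^ ℓ * Real.exp L) ≤ L ^ ℓ / (68 / 25 : ℝ) ^ ℓ := by
      rw [le_div_iff₀ (by positivity)]
      calc (L / 20) ^ (ℓ + 1) * ((9 / 8 : ℝ) ^ ℓ * Real.exp L) * (68 / 25 : ℝ) ^ ℓ
          ≤ (L / 20) ^ (ℓ + 1) * ((9 / 8 : ℝ) ^ ℓ * (68 / 25 : ℝ) ^ ℓ) * (68 / 25 : ℝ) ^ ℓ := by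
            apply mul_le_mul_of_nonneg_right _ (by positivity)
            apply mul_le_mul_of_nonneg_left _ (by positivity)
            exact mul_le_mul_of_nonneg_left hexpL (by positivity)
        _ = (L / 20) ^ (ℓ + 1) * (9 / 8 : ℝ) ^ ℓ * (68 / 25 : ℝ) ^ ℓ * (68 / 25 : ℝ) ^ ℓ := by ring
        _ ≤ L ^ ℓ := hcore
    have hfac' : L ^ ℓ / (68 / 25 : ℝ) ^ ℓ ≤ ((ℓ + 1).factorial : ℝ) := by
      have hq : L ^ ℓ / (68 / 25 : ℝ) ^ ℓ ≤ L ^ ℓ / Real.exp L :=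
        div_le_div_of_nonneg_left (by positivity) (Real.exp_pos L) hexpL
      have hq2 : L ^ ℓ / Real.exp L ≤ (ℓ.factorial : ℝ) := by
        rw [div_le_iff₀ (Real.exp_pos L)]; linarith
      linarith
    calc r ^ (ℓ + 1) * Real.exp (2 * r + L)
        = r ^ (ℓ + 1) * (Real.exp (2 * r) * Real.exp L) := by rw [← Real.exp_add]
      _ ≤ (L / 20) ^ (ℓ + 1) * ((9 / 8 : ℝ) ^ ℓ * Real.exp L) := by
          apply mul_le_mul hrpow _ (by positivity) (by positivity)
          exact mul_le_mul_of_nonneg_right hexp2r (Real.exp_pos L).le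
      _ ≤ L ^ ℓ / (68 / 25 : ℝ) ^ ℓ := hmain
      _ ≤ ((ℓ + 1).factorial : ℝ) := hfac'
  -- key : A * exp r ≤ exp (-r) * exp (-L)
  have hkey : A * Real.exp r ≤ Real.exp (-r) * Real.exp (-L) := by
    rw [← Real.exp_add, hA, div_mul_eq_mul_div, div_le_iff₀ hfacpos]
    have hsplit : Real.exp r = Real.exp (-r + -L) * Real.exp (2 * r + L) := by
      rw [← Real.exp_add]; congr 1; ring
    calc r ^ (ℓ + 1) * Real.exp r
        = Real.exp (-r + -L) * (r ^ (ℓ + 1) * Real.exp (2 * r + L)) := by rw [hsplit]; ring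
      _ ≤ Real.exp (-r + -L) * ((ℓ + 1).factorial : ℝ) :=
          mul_le_mul_of_nonneg_left h2 (Real.exp_pos _).le
  -- finish
  have hBr : Real.exp (-r) ≤ ‖Complex.exp z‖ := by
    rw [Complex.norm_exp]
    apply Real.exp_le_exp.2
    have h := Complex.abs_re_le_norm z
    rw [abs_le] at h
    linarith [h.1]
  have hD : ‖Complex.exp z - S‖ ≤ ‖Complex.exp z‖ * Real.exp (-L) := by
    calc ‖Complex.exp z - S‖ ≤ T := hDT
      _ ≤ A * Real.exp r := hTA
      _ ≤ Real.exp (-r) * Real.exp (-L) := hkey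
      _ ≤ ‖Complex.exp z‖ * Real.exp (-L) :=
          mul_le_mul_of_nonneg_right hBr (Real.exp_pos _).le
  have htri1 : ‖S‖ ≤ ‖Complex.exp z‖ + ‖Complex.exp z - S‖ := by
    have h := norm_sub_le (Complex.exp z) (Complex.exp z - S)
    have hs : Complex.exp z - (Complex.exp z - S) = S := by ring
    rwa [hs] at h
  have htri2 : ‖Complex.exp z‖ - ‖Complex.exp z - S‖ ≤ ‖S‖ := by
    have h := norm_sub_norm_le (Complex.exp z) (Complex.exp z - S)
    have hs : Complex.exp z - (Complex.exp z - S) = S := by ring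
    rwa [hs] at h
  constructor
  · rw [mul_add, mul_one]; linarith
  · rw [mul_sub, mul_one]; linarith
end

section
/- Let ℓ be a positive integer and z a complex number with |z| > ℓ/60. Then |∑_{r=0}^{ℓ} z^r/r!| ≤ (64|z|/ℓ)^ℓ. -/
/-!
Put `c = ℓ / 60`. Since `‖z‖ / c ≥ 1`, each term satisfies
`‖z‖ ^ r ≤ (‖z‖ / c) ^ ℓ * c ^ r` for `r ≤ ℓ`, so the partial exponential sum at `‖z‖` is at most
`(‖z‖ / c) ^ ℓ * exp c = (60 ‖z‖ / ℓ) ^ ℓ * exp (1 / 60) ^ ℓ`, and `exp (1 / 60) ≤ 16 / 15`.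
-/

open Finset Real

theorem norm_sum_pow_div_factorial_le {𝕜 : Type*} [RCLike 𝕜] (z : 𝕜) (n : ℕ) :
    ‖∑ r ∈ range n, z ^ r / r.factorial‖ ≤ ∑ r ∈ range n, ‖z‖ ^ r / r.factorial :=
  (norm_sum_le _ _).trans_eq <| sum_congr rfl fun r _ => by
    rw [norm_div, norm_pow, RCLike.norm_natCast]

theorem sum_pow_div_factorial_le_div_pow_mul_exp {a c : ℝ} (hc : 0 < c) (hca : c ≤ a) (n : ℕ) :
    ∑ r ∈ range (n + 1), a ^ r / r.factorial ≤ (a / c) ^ n * exp c := by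
  have hac : 1 ≤ a / c := (one_le_div hc).mpr hca
  calc ∑ r ∈ range (n + 1), a ^ r / r.factorial
      ≤ ∑ r ∈ range (n + 1), (a / c) ^ n * (c ^ r / r.factorial) := by
        refine sum_le_sum fun r hr => ?_
        have hrn : r ≤ n := Nat.lt_succ_iff.mp (mem_range.mp hr)
        calc a ^ r / r.factorial = (a / c) ^ r * (c ^ r / r.factorial) := by
              rw [div_pow, div_mul_div_cancel₀ (pow_ne_zero r hc.ne')]
          _ ≤ (a / c) ^ n * (c ^ r / r.factorial) := by
              gcongr
    _ = (a / c) ^ n * ∑ r ∈ range (n + 1), c ^ r / r.factorial := (mul_sum ..).symm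
    _ ≤ (a / c) ^ n * exp c :=
        mul_le_mul_of_nonneg_left (sum_le_exp_of_nonneg hc.le _)
          (pow_nonneg (zero_le_one.trans hac) n)

theorem exp_one_div_sixty_le : exp (1 / 60) ≤ 16 / 15 := by
  refine le_of_pow_le_pow_left₀ (n := 60) (by norm_num) (by norm_num) ?_
  rw [← exp_nat_mul, show ((60 : ℕ) : ℝ) * (1 / 60) = 1 by norm_num]
  calc exp 1 ≤ 2.7182818286 := exp_one_lt_d9.le
    _ ≤ (16 / 15 : ℝ) ^ 60 := by norm_num

theorem stmt_4 (ℓ : ℕ) (hℓ : 0 < ℓ) (z : ℂ) (hz : (ℓ : ℝ) / 60 < ‖z‖) :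
    ‖∑ r ∈ Finset.range (ℓ + 1), z ^ r / r.factorial‖
      ≤ (64 * ‖z‖ / ℓ) ^ ℓ := by
  have hc : (0 : ℝ) < ℓ / 60 := by positivity
  have hexp : exp ((ℓ : ℝ) / 60) ≤ (16 / 15) ^ ℓ := by
    rw [show (ℓ : ℝ) / 60 = ℓ * (1 / 60) by ring, exp_nat_mul]
    exact pow_le_pow_left₀ (exp_nonneg _) exp_one_div_sixty_le ℓ
  calc ‖∑ r ∈ range (ℓ + 1), z ^ r / r.factorial‖
      ≤ ∑ r ∈ range (ℓ + 1), ‖z‖ ^ r / r.factorial := norm_sum_pow_div_factorial_le z _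
    _ ≤ (‖z‖ / (ℓ / 60)) ^ ℓ * exp (ℓ / 60) :=
        sum_pow_div_factorial_le_div_pow_mul_exp hc hz.le ℓ
    _ ≤ (‖z‖ / (ℓ / 60)) ^ ℓ * (16 / 15) ^ ℓ := by gcongr
    _ = (64 * ‖z‖ / ℓ) ^ ℓ := by
        rw [← mul_pow]
        congr 1
        field_simp
        ring
end

section
/- Let q > 1 and a be integers. The number of primitive Dirichlet characters χ modulo q, weighted by χ(a), satisfies ∑*_{χ mod q} χ(a) = ∑_{c | gcd(q, a−1)} μ(q/c)·φ(c), where the star denotes summation over primitive characters modulo q, provided gcd(a,q)=1. -/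
/-!
Every Dirichlet character mod `n` is induced by a unique primitive character mod its conductor
`d ∣ n`, and inducing does not change the values at integers coprime to `n`. Hence
`∑_{χ mod n} χ(a) = ∑_{d ∣ n} ∑*_{ψ mod d} ψ(a)`, while by orthogonality the left side is `φ(n)`
if `n ∣ a - 1` and `0` otherwise. Möbius inversion over the divisor-closed set of `n` coprime to `a`
recovers the primitive sum at level `q`.
-/

open scoped Classical

open ArithmeticFunction
open scoped ArithmeticFunction.Moebius

theorem Nat.divisors_gcd_natCast_eq_filter_dvd {q : ℕ} (hq : q ≠ 0) (b : ℤ) :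
    (Int.gcd q b).divisors = {d ∈ q.divisors | ↑d ∣ b} := by
  ext d
  simp [Nat.mem_divisors, Int.dvd_gcd_iff, Int.natCast_dvd_natCast, hq]

namespace DirichletCharacter

section Decomposition

variable {R M : Type*} [CommRing R] [IsDomain R] [AddCommMonoid M]

theorem sum_conductor_eq_sum_isPrimitive {n d : ℕ} [NeZero n] (hd : d ∣ n)
    (f : DirichletCharacter R n → M) :
    ∑ χ with χ.conductor = d, f χ =
      ∑ ψ : DirichletCharacter R d with ψ.IsPrimitive, f (changeLevel hd ψ) := by
  symm
  refine Finset.sum_nbij (changeLevel hd) ?_ (changeLevel_injective hd).injOn ?_ fun _ _ ↦ rfl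
  · intro ψ hψ
    simp only [Finset.mem_filter, Finset.mem_univ, true_and] at hψ ⊢
    rwa [conductor_changeLevel]
  · intro χ hχ
    simp only [Finset.coe_filter, Finset.mem_univ, true_and, Set.mem_ofPred_eq] at hχ
    obtain ⟨_, ψ, rfl⟩ := hχ ▸ χ.factorsThrough_conductor
    refine ⟨ψ, ?_, rfl⟩
    simpa [isPrimitive_def, conductor_changeLevel] using hχ

theorem sum_apply_eq_sum_divisors_sum_isPrimitive {n : ℕ} [NeZero n] {a : ℤ}
    (ha : IsCoprime a n) :
    ∑ χ : DirichletCharacter R n, χ a =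
      ∑ d ∈ n.divisors, ∑ ψ : DirichletCharacter R d, if ψ.IsPrimitive then ψ a else 0 := by
  rw [← Finset.sum_fiberwise_of_maps_to (t := n.divisors) (g := conductor)
    fun χ _ ↦ Nat.mem_divisors.mpr ⟨χ.conductor_dvd_level, NeZero.ne n⟩]
  refine Finset.sum_congr rfl fun d hd ↦ ?_
  have hdn := Nat.dvd_of_mem_divisors hd
  rw [sum_conductor_eq_sum_isPrimitive hdn, Finset.sum_filter]
  refine Finset.sum_congr rfl fun ψ _ ↦ ?_
  rw [changeLevel_eq_cast_of_dvd' ψ hdn ha]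

end Decomposition

theorem sum_divisors_sum_isPrimitive_apply {n : ℕ} (hn : n ≠ 0) {a : ℤ} (ha : IsCoprime a n) :
    ∑ d ∈ n.divisors, ∑ ψ : DirichletCharacter ℂ d, (if ψ.IsPrimitive then ψ a else 0) =
      if (n : ℤ) ∣ a - 1 then (n.totient : ℂ) else 0 := by
  have : NeZero n := ⟨hn⟩
  rw [← sum_apply_eq_sum_divisors_sum_isPrimitive ha, sum_characters_eq]
  refine if_congr ?_ rfl rfl
  rw [← ZMod.intCast_zmod_eq_zero_iff_dvd, Int.cast_sub, Int.cast_one, sub_eq_zero]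

theorem sum_isPrimitive_apply_eq_sum_moebius {q : ℕ} (hq : q ≠ 0) {a : ℤ} (ha : IsCoprime a q) :
    ∑ χ : DirichletCharacter ℂ q, (if χ.IsPrimitive then χ a else 0) =
      ∑ d ∈ q.divisors with ↑d ∣ a - 1, (μ (q / d) : ℂ) * d.totient := by
  have hs : ∀ m n : ℕ, m ∣ n → IsCoprime a n → IsCoprime a m := fun m n hmn hn ↦
    hn.of_isCoprime_of_dvd_right (Int.natCast_dvd_natCast.mpr hmn)
  have inversion := (sum_eq_iff_sum_mul_moebius_eq_on {n | IsCoprime a n} hs).mp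
    (fun n hn hcop ↦ sum_divisors_sum_isPrimitive_apply hn.ne' hcop) q (Nat.pos_of_ne_zero hq) ha
  rw [← inversion, Finset.sum_filter,
    Nat.sum_divisorsAntidiagonal' fun x y ↦ (μ x : ℂ) * if (y : ℤ) ∣ a - 1 then (y.totient : ℂ) else 0]
  simp only [mul_ite, mul_zero]

end DirichletCharacter

theorem stmt_5 (q : ℕ) (hq : 1 < q) (a : ℤ) (ha : Int.gcd a q = 1) :
    (∑ χ : DirichletCharacter ℂ q, if χ.IsPrimitive then χ (a : ZMod q) else 0)
      = ((∑ c ∈ Nat.divisors (Int.gcd ((q : ℤ)) (a - 1)),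
          (ArithmeticFunction.moebius (q / c) : ℤ) * (Nat.totient c : ℤ) : ℤ) : ℂ) := by
  have hq0 : q ≠ 0 := by omega
  rw [DirichletCharacter.sum_isPrimitive_apply_eq_sum_moebius hq0
      (Int.isCoprime_iff_gcd_eq_one.mpr ha),
    Nat.divisors_gcd_natCast_eq_filter_dvd hq0]
  push_cast
  rfl
end

section
/- For x ≥ 2, ∑_{p ≤ x} (log p)/p = log x + O(1); that is, there is an absolute constant C such that |∑_{p ≤ x} (log p)/p − log x| ≤ C for all x ≥ 2. -/
/-
Legendre's identity `log N! = ∑_{d ≤ N} Λ(d) ⌊N/d⌋` and Stirling's `log N! = N log N + O(N)` give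
`N ∑_{d ≤ N} Λ(d)/d = N log N + O(N)`, since dropping the floors costs at most `ψ(N) = O(N)`
(Chebyshev). The prime powers `p^k` with `k ≥ 2` contribute at most the convergent series
`∑_p log p / (p (p - 1))`, and replacing `⌊x⌋` by `x` changes the logarithm by at most `log 2`.
-/

open Finset Real Chebyshev
open ArithmeticFunction hiding log
open scoped Nat

lemma sum_Ioc_log_eq_log_factorial (N : ℕ) : ∑ n ∈ Ioc 0 N, log n = log N ! := by
  induction N with
  | zero => simp
  | succ N ih =>
    rw [sum_Ioc_succ_top N.zero_le, ih, Nat.factorial_succ, Nat.cast_mul,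
      log_mul (by positivity) (by positivity), add_comm]

lemma sum_Ioc_log_eq_sum_vonMangoldt_mul_div (N : ℕ) :
    ∑ n ∈ Ioc 0 N, log n = ∑ d ∈ Ioc 0 N, Λ d * (N / d : ℕ) := by
  rw [← sum_Ioc_mul_zeta_eq_sum, vonMangoldt_mul_zeta]
  rfl

lemma abs_log_factorial_sub_mul_log_le (N : ℕ) : |log N ! - N * log N| ≤ N := by
  rcases N.eq_zero_or_pos with rfl | hN
  · simp
  have hupper : log N ! ≤ N * log N := by
    rw [← log_pow]
    exact log_le_log (by positivity) (mod_cast N.factorial_le_pow)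
  have hlower := Stirling.le_log_factorial_stirling hN.ne'
  have hlogN : 0 ≤ log N := log_natCast_nonneg N
  have hlog2π : 0 ≤ log (2 * π) := log_nonneg (by linarith [pi_gt_three])
  rw [abs_le]
  constructor <;> linarith

lemma mul_sum_div_sub_sum_mul_div_mem_Icc (s : Finset ℕ) (f : ℕ → ℝ) (hf : ∀ d ∈ s, 0 ≤ f d)
    (N : ℕ) :
    N * ∑ d ∈ s, f d / d - ∑ d ∈ s, f d * (N / d : ℕ) ∈ Set.Icc 0 (∑ d ∈ s, f d) := by
  have hsplit : N * ∑ d ∈ s, f d / d - ∑ d ∈ s, f d * (N / d : ℕ)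
      = ∑ d ∈ s, f d * ((N : ℝ) / d - (N / d : ℕ)) := by
    rw [mul_sum, ← sum_sub_distrib]
    exact sum_congr rfl fun d _ ↦ by ring
  have hfloor (d : ℕ) : (N : ℝ) / d - (N / d : ℕ) ∈ Set.Icc 0 1 := by
    rw [← Nat.floor_div_eq_div (K := ℝ)]
    constructor
    · linarith [Nat.floor_le (R := ℝ) (a := N / d) (by positivity)]
    · linarith [Nat.sub_one_lt_floor ((N : ℝ) / d)]
  rw [hsplit]
  constructor
  · exact sum_nonneg fun d hd ↦ mul_nonneg (hf d hd) (hfloor d).1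
  · exact sum_le_sum fun d hd ↦ mul_le_of_le_one_right (hf d hd) (hfloor d).2

lemma abs_sum_vonMangoldt_div_sub_log_le {N : ℕ} (hN : N ≠ 0) :
    |∑ d ∈ Ioc 0 N, Λ d / d - log N| ≤ log 4 + 5 := by
  have hN0 : (0 : ℝ) < N := by positivity
  obtain ⟨hlo, hhi⟩ := mul_sum_div_sub_sum_mul_div_mem_Icc (Ioc 0 N) (fun d ↦ Λ d)
    (fun _ _ ↦ vonMangoldt_nonneg) N
  have hpsi : ∑ d ∈ Ioc 0 N, Λ d ≤ (log 4 + 4) * N := by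
    simpa [psi] using psi_le_const_mul_self hN0.le
  have hlog := abs_log_factorial_sub_mul_log_le N
  rw [← sum_Ioc_log_eq_log_factorial, sum_Ioc_log_eq_sum_vonMangoldt_mul_div, abs_le] at hlog
  have key : |N * ∑ d ∈ Ioc 0 N, Λ d / d - N * log N| ≤ N * (log 4 + 5) := by
    rw [abs_le]
    constructor <;> linarith
  rwa [← mul_sub, abs_mul, abs_of_pos hN0, mul_le_mul_iff_of_pos_left hN0] at key

lemma natCast_mul_natCast_sub_one_nonneg (n : ℕ) : 0 ≤ (n : ℝ) * (n - 1) := by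
  rcases n with _ | n
  · simp
  · rw [Nat.cast_succ, add_sub_cancel_right]; positivity

lemma summable_log_div_mul_sub_one : Summable fun n : ℕ ↦ log n / (n * (n - 1)) := by
  refine Summable.of_nonneg_of_le
    (fun n ↦ div_nonneg (log_natCast_nonneg n) (natCast_mul_natCast_sub_one_nonneg n))
    (fun n ↦ ?_) ((summable_nat_rpow_inv.2 (by norm_num : (1 : ℝ) < 3 / 2)).mul_left 4)
  rcases lt_or_ge n 2 with hn | hn
  · interval_cases n <;> simp
  have hn0 : (0 : ℝ) < n := by positivity
  have hn2 : (2 : ℝ) ≤ n := mod_cast hn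
  have hlog : log n ≤ 2 * √n := by
    simpa [sqrt_eq_rpow, div_eq_mul_inv, mul_comm] using
      log_le_rpow_div (x := n) hn0.le (ε := 1 / 2) (by norm_num)
  have hpow : (n : ℝ) ^ (3 / 2 : ℝ) = n * √n := by
    rw [show (3 / 2 : ℝ) = 1 + 1 / 2 by norm_num, rpow_add hn0, rpow_one, sqrt_eq_rpow]
  rw [hpow, div_le_iff₀ (by nlinarith)]
  calc log n ≤ 2 * √n := hlog
    _ ≤ 4 * (n * √n)⁻¹ * (n * (n - 1)) := by
      rw [inv_eq_one_div]
      field_simp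
      nlinarith [sq_sqrt hn0.le]

lemma exists_prime_pow_of_vonMangoldt_ne_zero_of_not_prime {d : ℕ} (hΛ : Λ d ≠ 0)
    (hd : ¬ d.Prime) : ∃ p k, p.Prime ∧ 2 ≤ k ∧ p ^ k = d := by
  obtain ⟨p, k, hp, hk, rfl⟩ := (isPrimePow_nat_iff d).1 (vonMangoldt_ne_zero_iff.1 hΛ)
  refine ⟨p, k, hp, ?_, rfl⟩
  by_contra! hk2
  obtain rfl : k = 1 := by omega
  exact hd (by simpa using hp)

lemma sum_vonMangoldt_div_not_prime_le (N : ℕ) :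
    ∑ d ∈ Ioc 0 N with ¬ d.Prime, Λ d / d
      ≤ ∑ p ∈ Ioc 0 N with p.Prime, log p / (p * (p - 1)) := by
  set P := {p ∈ Ioc 0 N | p.Prime}
  set powers := (P ×ˢ Ico 2 (N + 1)).image fun q ↦ q.1 ^ q.2
  have hsupport : ∀ d ∈ {d ∈ Ioc 0 N | ¬ d.Prime}, Λ d / d ≠ 0 → d ∈ powers := by
    intro d hd hΛ
    simp only [mem_filter, mem_Ioc] at hd
    obtain ⟨p, k, hp, hk, rfl⟩ :=
      exists_prime_pow_of_vonMangoldt_ne_zero_of_not_prime (left_ne_zero_of_mul hΛ) hd.2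
    have hpN : p ≤ N := (Nat.le_self_pow (by omega) p).trans hd.1.2
    have hkN : k < N + 1 := by
      have := Nat.lt_pow_self (n := k) hp.one_lt
      omega
    exact mem_image.2 ⟨(p, k), by simp [P, hp, hp.pos, hpN, hk, hkN], rfl⟩
  have hnonneg : ∀ d, 0 ≤ Λ d / d := fun d ↦ div_nonneg vonMangoldt_nonneg d.cast_nonneg
  calc ∑ d ∈ Ioc 0 N with ¬ d.Prime, Λ d / d
      = ∑ d ∈ Ioc 0 N with ¬ d.Prime ∧ d ∈ powers, Λ d / d := by
        rw [← filter_filter, sum_filter_of_ne hsupport]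
    _ ≤ ∑ d ∈ powers, Λ d / d :=
        sum_le_sum_of_subset_of_nonneg (fun d hd ↦ (mem_filter.1 hd).2.2) fun d _ _ ↦ hnonneg d
    _ ≤ ∑ q ∈ P ×ˢ Ico 2 (N + 1), Λ (q.1 ^ q.2) / (q.1 ^ q.2 : ℕ) :=
        sum_image_le_of_nonneg fun d _ ↦ hnonneg d
    _ = ∑ p ∈ P, log p * ∑ k ∈ Ico 2 (N + 1), (p : ℝ)⁻¹ ^ k := by
        rw [sum_product]
        refine sum_congr rfl fun p hp ↦ ?_
        rw [mul_sum]
        refine sum_congr rfl fun k hk ↦ ?_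
        rw [vonMangoldt_apply_pow (by simp at hk; omega),
          vonMangoldt_apply_prime (mem_filter.1 hp).2]
        push_cast
        rw [inv_pow, div_eq_mul_inv]
    _ ≤ ∑ p ∈ P, log p * ((p : ℝ)⁻¹ ^ 2 / (1 - (p : ℝ)⁻¹)) := by
        gcongr with p hp
        exact geom_sum_Ico_le_of_lt_one (by positivity)
            (inv_lt_one_of_one_lt₀ (mod_cast (mem_filter.1 hp).2.one_lt))
    _ = ∑ p ∈ P, log p / (p * (p - 1)) := by
        refine sum_congr rfl fun p hp ↦ ?_
        have hp1 : (1 : ℝ) < p := mod_cast (mem_filter.1 hp).2.one_lt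
        field_simp

lemma sum_vonMangoldt_div_sub_sum_log_div_prime (N : ℕ) :
    ∑ d ∈ Ioc 0 N, Λ d / d - ∑ p ∈ Ioc 0 N with p.Prime, log p / p
      = ∑ d ∈ Ioc 0 N with ¬ d.Prime, Λ d / d := by
  have hprimes : ∑ p ∈ Ioc 0 N with p.Prime, Λ p / p = ∑ p ∈ Ioc 0 N with p.Prime, log p / p :=
    sum_congr rfl fun p hp ↦ by rw [vonMangoldt_apply_prime (mem_filter.1 hp).2]
  rw [← sum_filter_add_sum_filter_not (Ioc 0 N) Nat.Prime, hprimes, add_sub_cancel_left]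

lemma abs_sum_log_div_prime_sub_log_le {N : ℕ} (hN : N ≠ 0) :
    |∑ p ∈ Ioc 0 N with p.Prime, log p / p - log N|
      ≤ log 4 + 5 + ∑' n : ℕ, log n / (n * (n - 1)) := by
  have hΛ := abs_sum_vonMangoldt_div_sub_log_le hN
  have htail := sum_vonMangoldt_div_sub_sum_log_div_prime N
  have htail_nonneg : 0 ≤ ∑ d ∈ Ioc 0 N with ¬ d.Prime, Λ d / d :=
    sum_nonneg fun d _ ↦ div_nonneg vonMangoldt_nonneg d.cast_nonneg
  have htail_le : ∑ d ∈ Ioc 0 N with ¬ d.Prime, Λ d / d ≤ ∑' n : ℕ, log n / (n * (n - 1)) :=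
    (sum_vonMangoldt_div_not_prime_le N).trans <| summable_log_div_mul_sub_one.sum_le_tsum _
      fun n _ ↦ div_nonneg (log_natCast_nonneg n) (natCast_mul_natCast_sub_one_nonneg n)
  rw [abs_le] at hΛ ⊢
  constructor <;> linarith

lemma abs_log_sub_log_floor_le {x : ℝ} (hx : 1 ≤ x) : |log x - log ⌊x⌋₊| ≤ log 2 := by
  have hN : (1 : ℝ) ≤ ⌊x⌋₊ := mod_cast Nat.one_le_floor_iff x |>.2 hx
  have hle : (⌊x⌋₊ : ℝ) ≤ x := Nat.floor_le (by linarith)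
  have hlt : x < 2 * ⌊x⌋₊ := by linarith [Nat.lt_floor_add_one x]
  rw [abs_of_nonneg (sub_nonneg.2 (log_le_log (by linarith) hle)), sub_le_iff_le_add,
    ← log_mul (by norm_num) (by linarith)]
  exact log_le_log (by linarith) hlt.le

lemma filter_prime_range_succ (N : ℕ) :
    {p ∈ range (N + 1) | p.Prime} = {p ∈ Ioc 0 N | p.Prime} := by
  ext p
  simp only [mem_filter, mem_range, mem_Ioc, Nat.lt_succ_iff]
  exact ⟨fun ⟨hpN, hp⟩ ↦ ⟨⟨hp.pos, hpN⟩, hp⟩, fun ⟨⟨_, hpN⟩, hp⟩ ↦ ⟨hpN, hp⟩⟩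

theorem stmt_7 :
    ∃ C : ℝ, ∀ x : ℝ, 2 ≤ x →
      |(∑ p ∈ (Finset.range (⌊x⌋₊ + 1)).filter Nat.Prime, Real.log p / p) - Real.log x| ≤ C := by
  refine ⟨log 4 + 5 + ∑' n : ℕ, log n / (n * (n - 1)) + log 2, fun x hx ↦ ?_⟩
  have hN : ⌊x⌋₊ ≠ 0 := (Nat.floor_pos.2 (by linarith)).ne'
  rw [filter_prime_range_succ]
  calc _ ≤ |∑ p ∈ Ioc 0 ⌊x⌋₊ with p.Prime, log p / p - log ⌊x⌋₊| + |log ⌊x⌋₊ - log x| :=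
        abs_sub_le _ _ _
    _ ≤ _ := by
      rw [abs_sub_comm (log _)]
      exact add_le_add (abs_sum_log_div_prime_sub_log_le hN)
        (abs_log_sub_log_floor_le (by linarith))
end

section
/- Let P be a finite set of primes, ℓ a positive integer, c > 0 and λ completely multiplicative with |λ(p)| ≤ 2. Then the sum over integers n supported on P with Ω(n) > ℓ of λ(n)² c^{Ω(n)}/(n w(n)²) is at most 2^{−ℓ} ∏_{p∈P} exp(2c·λ(p)²/p + O(1/p²)). -/
/-- The multiplicative function `w` with `w(p^α) = α!`. -/
def wfun (n : ℕ) : ℕ := n.factorization.prod fun _ k => k.factorial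

/-!
Rankin's trick: on the terms with `Ω(n) > ℓ` we have `1 ≤ 2^(Ω(n) - ℓ)`, so the sum is at most
`2^(-ℓ)` times the sum of `λ(n)² (2c)^Ω(n) / (n w(n)²)` over all `P`-factored `n`. This summand
factors over the exponents of `n`, with local factor `x_p^k / (k!)²` at `p^k`, where
`x_p = 2cλ(p)²/p`; hence its sum is at most the Euler product `∏_{p ∈ P} ∑_k x_p^k / (k!)²`,
and `∑_k x^k / (k!)² ≤ exp x`. So any `C > 0` works.
-/

open Finset Real

noncomputable def summand (lam : ℕ → ℝ) (a : ℝ) (n : ℕ) : ℝ :=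
  lam n ^ 2 * a ^ n.primeFactorsList.length / ((n : ℝ) * (wfun n : ℝ) ^ 2)

lemma summand_nonneg (lam : ℕ → ℝ) {a : ℝ} (ha : 0 ≤ a) (n : ℕ) : 0 ≤ summand lam a n := by
  unfold summand; positivity

lemma summand_le_two_rpow_neg_mul_summand (lam : ℕ → ℝ) {a : ℝ} (ha : 0 ≤ a) {ℓ n : ℕ}
    (hℓ : ℓ ≤ n.primeFactorsList.length) :
    summand lam a n ≤ 2 ^ (-(ℓ : ℝ)) * summand lam (2 * a) n := by
  have h2 : summand lam (2 * a) n = 2 ^ n.primeFactorsList.length * summand lam a n := by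
    simp only [summand, mul_pow]; ring
  rw [h2, rpow_neg zero_le_two, rpow_natCast, ← mul_assoc, ← div_eq_inv_mul]
  refine le_mul_of_one_le_left (summand_nonneg lam ha n) ?_
  rw [one_le_div (by positivity)]
  exact pow_le_pow_right₀ one_le_two hℓ

lemma summand_eq_factorization_prod (lam : ℕ →* ℝ) (a : ℝ) {n : ℕ} (hn : n ≠ 0) :
    summand lam a n =
      n.factorization.prod fun p k => (a * lam p ^ 2 / p) ^ k / (k.factorial : ℝ) ^ 2 := by
  have hlam : lam n = n.factorization.prod fun p k => lam p ^ k := by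
    conv_lhs => rw [← Nat.prod_factorization_pow_eq_self hn]
    simp [map_finsuppProd]
  have hcast : (n : ℝ) = n.factorization.prod fun p k => (p : ℝ) ^ k := by
    conv_lhs => rw [← Nat.prod_factorization_pow_eq_self hn]
    simp [Nat.cast_finsuppProd]
  have hw : (wfun n : ℝ) = n.factorization.prod fun _ k => (k.factorial : ℝ) := by
    simp [wfun, Nat.cast_finsuppProd]
  have hΩ : a ^ n.primeFactorsList.length = n.factorization.prod fun _ k => a ^ k := by
    rw [← ArithmeticFunction.cardFactors_apply, ArithmeticFunction.cardFactors_eq_sum_factorization,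
      Finsupp.sum, ← prod_pow_eq_pow_sum]; rfl
  simp only [summand, hlam, hcast, hw, hΩ, Finsupp.prod, ← prod_pow, ← prod_mul_distrib,
    ← prod_div_distrib]
  refine prod_congr rfl fun p _ => ?_
  ring

lemma sum_range_pow_div_factorial_sq_le_exp {x : ℝ} (hx : 0 ≤ x) (N : ℕ) :
    ∑ k ∈ range N, x ^ k / (k.factorial : ℝ) ^ 2 ≤ exp x := by
  refine le_trans (sum_le_sum fun k _ => ?_) (sum_le_exp_of_nonneg hx N)
  have hk : (1 : ℝ) ≤ k.factorial := by exact_mod_cast k.factorial_pos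
  exact div_le_div_of_nonneg_left (by positivity) (by positivity) (by nlinarith)

lemma injOn_factorization_factoredNumbers (P : Finset ℕ) :
    Set.InjOn (fun n p (_ : p ∈ P) => n.factorization p) (Nat.factoredNumbers P) := by
  intro m hm n hn hmn
  refine Nat.factorization_inj hm.1 hn.1 (Finsupp.ext fun p => ?_)
  by_cases hp : p ∈ P
  · exact congr_fun₂ hmn p hp
  · have hP (k : ℕ) (hk : k ∈ Nat.factoredNumbers P) : k.factorization p = 0 :=
      Finsupp.notMem_support_iff.1 fun h =>
        hp (Nat.primeFactors_subset_of_mem_factoredNumbers hk (Nat.support_factorization k ▸ h))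
    rw [hP m hm, hP n hn]

lemma sum_factorization_prod_le_prod {P S : Finset ℕ} (hS : ∀ n ∈ S, n ∈ Nat.factoredNumbers P)
    {g : ℕ → ℕ → ℝ} (hg₀ : ∀ p, g p 0 = 1) (hg : ∀ p ∈ P, ∀ k, 0 ≤ g p k) {B : ℕ → ℝ}
    (hB : ∀ p ∈ P, ∀ N, ∑ k ∈ range N, g p k ≤ B p) :
    ∑ n ∈ S, n.factorization.prod g ≤ ∏ p ∈ P, B p := by
  set N := S.sup id + 1
  have hsupp (n) (hn : n ∈ S) : n.factorization.support ⊆ P :=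
    Nat.support_factorization n ▸ Nat.primeFactors_subset_of_mem_factoredNumbers (hS n hn)
  have hmem_pi (n) (hn : n ∈ S) : (fun p (_ : p ∈ P) => n.factorization p) ∈ P.pi fun _ => range N :=
    mem_pi.2 fun p _ => mem_range.2 <| Nat.lt_succ_of_le <|
      (Nat.factorization_lt p (hS n hn).1).le.trans (le_sup (f := id) hn)
  calc ∑ n ∈ S, n.factorization.prod g
      = ∑ n ∈ S, ∏ q ∈ P.attach, g q (n.factorization q) := sum_congr rfl fun n hn =>
        (Finsupp.prod_of_support_subset _ (hsupp n hn) _ fun p _ => hg₀ p).trans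
          (prod_attach P fun p => g p (n.factorization p)).symm
    _ = ∑ e ∈ S.image fun n p (_ : p ∈ P) => n.factorization p, ∏ q ∈ P.attach, g q (e q q.2) :=
        (sum_image (f := fun e => ∏ q ∈ P.attach, g q (e q q.2))
          ((injOn_factorization_factoredNumbers P).mono hS)).symm
    _ ≤ ∑ e ∈ P.pi fun _ => range N, ∏ q ∈ P.attach, g q (e q q.2) :=
        sum_le_sum_of_subset_of_nonneg (image_subset_iff.2 hmem_pi)
          fun _ _ _ => prod_nonneg fun q _ => hg q q.2 _
    _ = ∏ p ∈ P, ∑ k ∈ range N, g p k := (prod_sum P _ g).symm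
    _ ≤ ∏ p ∈ P, B p :=
        prod_le_prod (fun p hp => sum_nonneg fun k _ => hg p hp k) fun p hp => hB p hp N

theorem stmt_11 (c : ℝ) (hc : 0 < c) :
    ∃ C : ℝ, 0 < C ∧ ∀ (P : Finset ℕ) (ℓ : ℕ) (lam : ℕ → ℝ),
      (∀ p ∈ P, p.Prime) → 0 < ℓ → lam 1 = 1 →
      (∀ m n : ℕ, lam (m * n) = lam m * lam n) → (∀ p : ℕ, p.Prime → |lam p| ≤ 2) →
      (∑' n : ℕ, if 0 < n ∧ (∀ p ∈ n.primeFactors, p ∈ P) ∧ ℓ < n.primeFactorsList.length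
            then lam n ^ 2 * c ^ n.primeFactorsList.length / ((n : ℝ) * (wfun n : ℝ) ^ 2)
            else 0)
        ≤ (2 : ℝ) ^ (-(ℓ : ℝ)) * ∏ p ∈ P, Real.exp (2 * c * lam p ^ 2 / (p : ℝ) + C / (p : ℝ) ^ 2) := by
  refine ⟨1, one_pos, fun P ℓ lam _ _ h1 hmul _ => ?_⟩
  let L : ℕ →* ℝ := ⟨⟨lam, h1⟩, hmul⟩
  have h2c : 0 ≤ 2 * c := by positivity
  refine tsum_le_of_sum_le' (by positivity) fun S => ?_
  calc _ ≤ ∑ n ∈ S with n ∈ Nat.factoredNumbers P, 2 ^ (-(ℓ : ℝ)) * summand lam (2 * c) n := by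
        rw [sum_filter]
        refine sum_le_sum fun n _ => ?_
        split_ifs with hn hP
        · exact summand_le_two_rpow_neg_mul_summand lam hc.le hn.2.2.le
        · exact absurd (Nat.mem_factoredNumbers_of_primeFactors_subset hn.1.ne' hn.2.1) hP
        · exact mul_nonneg (by positivity) (summand_nonneg lam h2c n)
        · exact le_rfl
    _ ≤ 2 ^ (-(ℓ : ℝ)) * ∏ p ∈ P, exp (2 * c * lam p ^ 2 / p) := by
        rw [← mul_sum]
        gcongr
        refine (sum_congr rfl fun n hn =>
          summand_eq_factorization_prod L (2 * c) (mem_filter.1 hn).2.1).trans_le ?_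
        exact sum_factorization_prod_le_prod (fun n hn => (mem_filter.1 hn).2) (by simp)
          (fun p _ k => by positivity)
          fun p _ N => sum_range_pow_div_factorial_sq_le_exp (by positivity) N
    _ ≤ _ := by gcongr; exact le_add_of_nonneg_right (by positivity)
end

section
/- Let P be a finite set of primes, k > 0 real, and λ completely multiplicative with λ(1)=1, |λ(p)| ≤ 2. Define for each prime p ∈ P the local factor F_p = ∑_{i=0}^{∞} (λ(p)^i k^i)/(p^i i!) · (∑_{l=0}^{i} ((k−1)^l/l!)·λ(p)^l·λ(p^{i−l})) where λ(p^j) denotes the Hecke eigenvalue satisfying the recursion λ(p^{j+1}) = λ(p)λ(p^j) − λ(p^{j−1}). Then F_p = 1 + k²λ(p)²/p + O(1/p²), with implied constant depending only on k. -/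
/-!
Write `t = λ(p)`. The Hecke recursion preserves `λ(p^{j+1})² - t λ(p^{j+1}) λ(p^j) + λ(p^j)² = 1`,
and since `t² ≤ 4` this forces `|λ(p^{j+1})| ≤ |λ(p^j)| + 1`, hence `|λ(p^j)| ≤ j + 1`.
So the inner sum of the `i`-th term is at most `(i + 1) e^{2|k-1|}`, and the `i`-th term is
dominated by `e^{2|k-1|} (4|k|/p)^i / i!`. The terms `i = 0, 1` are exactly `1` and `k²t²/p`,
and the tail `i ≥ 2` of an exponential series in `x = 4|k|/p` is at most `x² e^x = O(1/p²)`.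
-/

open Finset Nat Real

section HeckeRecurrence

variable {lam : ℕ → ℝ}

theorem hecke_recurrence_invariant (h0 : lam 0 = 1)
    (hrec : ∀ j, lam (j + 2) = lam 1 * lam (j + 1) - lam j) (j : ℕ) :
    lam (j + 1) ^ 2 - lam 1 * lam (j + 1) * lam j + lam j ^ 2 = 1 := by
  induction j with
  | zero => rw [h0]; ring
  | succ j ih => rw [show j + 1 + 1 = j + 2 from rfl, hrec j]; linear_combination ih

theorem abs_hecke_succ_le (h0 : lam 0 = 1) (h1 : |lam 1| ≤ 2)
    (hrec : ∀ j, lam (j + 2) = lam 1 * lam (j + 1) - lam j) (j : ℕ) :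
    |lam (j + 1)| ≤ |lam j| + 1 := by
  have hinv := hecke_recurrence_invariant h0 hrec j
  -- the invariant reads `(b - t a / 2)² + (1 - t² / 4) a² = 1` for `t = lam 1`, `a = lam j`,
  -- `b = lam (j + 1)`
  have hdev : |lam (j + 1) - lam 1 / 2 * lam j| ≤ 1 := by
    have ht : lam 1 ^ 2 ≤ 4 := by nlinarith [sq_abs (lam 1), abs_nonneg (lam 1)]
    rw [← sq_le_one_iff_abs_le_one]
    nlinarith [mul_nonneg (sub_nonneg.2 ht) (sq_nonneg (lam j))]
  have hhalf : |lam 1 / 2 * lam j| ≤ |lam j| := by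
    rw [abs_mul, abs_div, abs_two]
    nlinarith [abs_nonneg (lam j)]
  calc |lam (j + 1)| = |(lam (j + 1) - lam 1 / 2 * lam j) + lam 1 / 2 * lam j| := by ring_nf
    _ ≤ |lam (j + 1) - lam 1 / 2 * lam j| + |lam 1 / 2 * lam j| := abs_add_le _ _
    _ ≤ |lam j| + 1 := by linarith

theorem abs_hecke_le (h0 : lam 0 = 1) (h1 : |lam 1| ≤ 2)
    (hrec : ∀ j, lam (j + 2) = lam 1 * lam (j + 1) - lam j) (j : ℕ) :
    |lam j| ≤ j + 1 := by
  induction j with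
  | zero => simp [h0]
  | succ j ih => push_cast; linarith [abs_hecke_succ_le h0 h1 hrec j]

end HeckeRecurrence

section ExponentialSeries

theorem abs_sum_pow_div_factorial_mul_le (x B : ℝ) (b : ℕ → ℝ) (n : ℕ) (hB : 0 ≤ B)
    (hb : ∀ l ∈ range n, |b l| ≤ B) :
    |∑ l ∈ range n, x ^ l / l ! * b l| ≤ B * exp |x| := by
  calc |∑ l ∈ range n, x ^ l / l ! * b l| ≤ ∑ l ∈ range n, |x| ^ l / l ! * B := by
        refine (abs_sum_le_sum_abs _ _).trans (sum_le_sum fun l hl => ?_)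
        rw [abs_mul, abs_div, abs_pow, Nat.abs_cast]
        gcongr
        exact hb l hl
    _ = B * ∑ l ∈ range n, |x| ^ l / l ! := by rw [← sum_mul, mul_comm]
    _ ≤ B * exp |x| := by gcongr; exact sum_le_exp_of_nonneg (abs_nonneg x) n

variable {g : ℕ → ℝ} {A x : ℝ}

theorem summable_of_abs_le_exp_series (hg : ∀ i, |g i| ≤ A * (x ^ i / i !)) : Summable g :=
  .of_norm_bounded ((summable_pow_div_factorial x).mul_left A) hg

theorem abs_tsum_add_two_le_of_abs_le_exp_series (hx : 0 ≤ x)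
    (hg : ∀ i, |g i| ≤ A * (x ^ i / i !)) :
    |∑' i, g (i + 2)| ≤ A * x ^ 2 * exp x := by
  have hA : 0 ≤ A := by simpa using (abs_nonneg _).trans (hg 0)
  have htail : ∀ i, |g (i + 2)| ≤ A * x ^ 2 * (x ^ i / i !) := fun i => by
    calc |g (i + 2)| ≤ A * (x ^ (i + 2) / (i + 2) !) := hg (i + 2)
      _ = A * x ^ 2 * (x ^ i / (i + 2) !) := by ring
      _ ≤ A * x ^ 2 * (x ^ i / i !) := by
        gcongr
        omega
  have hsum : Summable fun i => |g (i + 2)| :=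
    ((summable_nat_add_iff 2).mpr (summable_of_abs_le_exp_series hg)).abs
  calc |∑' i, g (i + 2)| ≤ ∑' i, |g (i + 2)| := norm_tsum_le_tsum_norm (f := fun i => g (i + 2)) hsum
    _ ≤ A * x ^ 2 * exp x := by
      refine tsum_le_of_sum_range_le (fun _ => abs_nonneg _) fun n => ?_
      calc ∑ i ∈ range n, |g (i + 2)| ≤ ∑ i ∈ range n, A * x ^ 2 * (x ^ i / i !) :=
            sum_le_sum fun i _ => htail i
        _ ≤ A * x ^ 2 * exp x := by rw [← mul_sum]; gcongr; exact sum_le_exp_of_nonneg hx n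

end ExponentialSeries

section LocalFactor

/-- `lam j` stands for `λ(p^j)`. -/
noncomputable def localFactorTerm (k p : ℝ) (lam : ℕ → ℝ) (i : ℕ) : ℝ :=
  lam 1 ^ i * k ^ i / (p ^ i * i !) *
    ∑ l ∈ range (i + 1), ((k - 1) ^ l / l !) * lam 1 ^ l * lam (i - l)

variable {k p : ℝ} {lam : ℕ → ℝ}

theorem localFactorTerm_zero (h0 : lam 0 = 1) : localFactorTerm k p lam 0 = 1 := by
  simp [localFactorTerm, h0]

theorem localFactorTerm_one (h0 : lam 0 = 1) :
    localFactorTerm k p lam 1 = k ^ 2 * lam 1 ^ 2 / p := by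
  simp only [localFactorTerm, sum_range_succ, sum_range_zero, tsub_self, tsub_zero, h0,
    factorial_zero, factorial_one, cast_one]
  ring

theorem abs_sum_hecke_le (h0 : lam 0 = 1) (h1 : |lam 1| ≤ 2)
    (hrec : ∀ j, lam (j + 2) = lam 1 * lam (j + 1) - lam j) (i : ℕ) :
    |∑ l ∈ range (i + 1), ((k - 1) ^ l / l !) * lam 1 ^ l * lam (i - l)|
      ≤ (i + 1) * exp (2 * |k - 1|) :=
  calc |∑ l ∈ range (i + 1), ((k - 1) ^ l / l !) * lam 1 ^ l * lam (i - l)|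
      = |∑ l ∈ range (i + 1), ((k - 1) * lam 1) ^ l / l ! * lam (i - l)| := by
        congr 1; exact sum_congr rfl fun l _ => by rw [mul_pow]; ring
    _ ≤ (i + 1) * exp |(k - 1) * lam 1| := by
        refine abs_sum_pow_div_factorial_mul_le _ _ _ _ (by positivity) fun l _ => ?_
        refine (abs_hecke_le h0 h1 hrec (i - l)).trans ?_
        gcongr
        exact Nat.sub_le i l
    _ ≤ (i + 1) * exp (2 * |k - 1|) := by
        gcongr
        rw [abs_mul, mul_comm]
        gcongr

theorem abs_localFactorTerm_le (hp : 0 < p) (h0 : lam 0 = 1) (h1 : |lam 1| ≤ 2)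
    (hrec : ∀ j, lam (j + 2) = lam 1 * lam (j + 1) - lam j) (i : ℕ) :
    |localFactorTerm k p lam i| ≤ exp (2 * |k - 1|) * ((4 * |k| / p) ^ i / i !) := by
  have hi : (i : ℝ) + 1 ≤ 2 ^ i := by exact_mod_cast Nat.lt_two_pow_self
  calc |localFactorTerm k p lam i|
      = |lam 1| ^ i * |k| ^ i / (p ^ i * i !) *
          |∑ l ∈ range (i + 1), ((k - 1) ^ l / l !) * lam 1 ^ l * lam (i - l)| := by
        rw [localFactorTerm, abs_mul, abs_div, abs_mul, abs_pow, abs_pow,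
          abs_of_pos (by positivity : (0 : ℝ) < p ^ i * i !)]
    _ ≤ 2 ^ i * |k| ^ i / (p ^ i * i !) * (2 ^ i * exp (2 * |k - 1|)) := by
        gcongr
        exact (abs_sum_hecke_le h0 h1 hrec i).trans (by gcongr)
    _ = exp (2 * |k - 1|) * ((4 * |k| / p) ^ i / i !) := by
        rw [div_pow, mul_pow, show (4 : ℝ) ^ i = 2 ^ i * 2 ^ i by rw [← mul_pow]; norm_num]
        field_simp

end LocalFactor

theorem stmt_19_general (k : ℝ) :
    ∃ C : ℝ, 0 < C ∧ ∀ (p : ℕ), p.Prime → ∀ lam : ℕ → ℝ,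
      lam 0 = 1 → |lam 1| ≤ 2 → (∀ j, lam (j + 2) = lam 1 * lam (j + 1) - lam j) →
      |(∑' i : ℕ, lam 1 ^ i * k ^ i / ((p : ℝ) ^ i * (i.factorial : ℝ))
            * ∑ l ∈ Finset.range (i + 1), ((k - 1) ^ l / (l.factorial : ℝ)) * lam 1 ^ l * lam (i - l))
          - (1 + k ^ 2 * lam 1 ^ 2 / (p : ℝ))| ≤ C / (p : ℝ) ^ 2 := by
  -- the `+ 1` keeps `C` positive when `k = 0`
  refine ⟨exp (2 * |k - 1|) * (4 * |k| + 1) ^ 2 * exp (4 * |k|), by positivity, ?_⟩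
  intro p hp lam h0 h1 hrec
  have hp1 : (1 : ℝ) ≤ p := by exact_mod_cast hp.one_lt.le
  have hterm := abs_localFactorTerm_le (k := k) (p := p) (by positivity) h0 h1 hrec
  have hsum := summable_of_abs_le_exp_series hterm
  have hsplit : ∑' i, localFactorTerm k p lam i - (1 + k ^ 2 * lam 1 ^ 2 / p)
      = ∑' i, localFactorTerm k p lam (i + 2) := by
    rw [hsum.tsum_eq_zero_add, ((summable_nat_add_iff 1).mpr hsum).tsum_eq_zero_add,
      localFactorTerm_zero h0, localFactorTerm_one h0]
    ring
  change |∑' i, localFactorTerm k p lam i - _| ≤ _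
  rw [hsplit]
  calc _ ≤ exp (2 * |k - 1|) * (4 * |k| / p) ^ 2 * exp (4 * |k| / p) :=
        abs_tsum_add_two_le_of_abs_le_exp_series (by positivity) hterm
    _ ≤ exp (2 * |k - 1|) * ((4 * |k| + 1) ^ 2 / p ^ 2) * exp (4 * |k|) := by
        rw [div_pow]
        gcongr
        · linarith
        · exact div_le_self (by positivity) hp1
    _ = _ := by ring

theorem stmt_19 (k : ℝ) (hk : 0 < k) :
    ∃ C : ℝ, 0 < C ∧ ∀ (p : ℕ), p.Prime → ∀ lam : ℕ → ℝ,
      lam 0 = 1 → |lam 1| ≤ 2 → (∀ j, lam (j + 2) = lam 1 * lam (j + 1) - lam j) →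
      |(∑' i : ℕ, lam 1 ^ i * k ^ i / ((p : ℝ) ^ i * (i.factorial : ℝ))
            * ∑ l ∈ Finset.range (i + 1), ((k - 1) ^ l / (l.factorial : ℝ)) * lam 1 ^ l * lam (i - l))
          - (1 + k ^ 2 * lam 1 ^ 2 / (p : ℝ))| ≤ C / (p : ℝ) ^ 2 :=
  stmt_19_general k
end
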